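/- arXiv:2002.05792 — 2 statements merged into one kernel-verified Lean document; each statement's English description precedes it below -/
import Mathlib

section
/- Let p ≥ 3 be an integer and λ ≥ 0. Let f : (0,∞) → ℝ be monotone non-decreasing and such that for every integer m ≥ p, f is integrable with respect to χ²_m and the Poisson-mixture series Σ_{k≥0} e^{-λ/2}(λ/2)^k/k! · E_{χ²_{p+2k}}[|f|] and Σ_{k≥0} e^{-λ/2}(λ/2)^k/k! · E_{χ²_{p+2+2k}}[|f|] converge. Then E_{χ²_{p+2}(λ)}[f] ≥ E_{χ²_p(λ)}[f]. -/
open MeasureTheory ProbabilityTheory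

/-- The chi-square distribution with `m` degrees of freedom: the Gamma distribution
with shape `m/2` and rate `1/2`. -/
noncomputable def chiSq (m : ℕ) : Measure ℝ := gammaMeasure ((m : ℝ) / 2) (1 / 2)

/-- Expectation of `f` under the chi-square distribution with `m` degrees of freedom. -/
noncomputable def chiSqExp (m : ℕ) (f : ℝ → ℝ) : ℝ := ∫ u, f u ∂(chiSq m)

/-- Expectation of `f` under the noncentral chi-square distribution with `p` degrees of
freedom and noncentrality parameter `lam`, as a Poisson mixture of central chi-squares. -/
noncomputable def ncChiSqExp (p : ℕ) (lam : ℝ) (f : ℝ → ℝ) : ℝ :=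
  ∑' k : ℕ, (Real.exp (-(lam / 2)) * (lam / 2) ^ k / (Nat.factorial k)) * chiSqExp (p + 2 * k) f

/-!
The Gamma densities satisfy `g_{a+1}(x) = (r x / a) g_a(x)`, so `g_{a+1} - g_a` has the sign of
`x - a / r`. For `f` non-decreasing, `(g_{a+1} - g_a)(f - f(a/r))` is therefore non-negative,
and integrating it gives `E_{a+1}[f] - E_a[f] ≥ 0`. Chi-square laws are the Gamma laws of rate
`1/2`, so `χ²_m ≤ χ²_{m+2}` in this sense, and the noncentral inequality follows by comparing the
two Poisson mixtures term by term.
-/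

open Real Set

lemma integral_sub_const_of_isProbabilityMeasure {α : Type*} [MeasurableSpace α] {μ : Measure α}
    [IsProbabilityMeasure μ] {f : α → ℝ} (hf : Integrable f μ) (c : ℝ) :
    ∫ x, (f x - c) ∂μ = ∫ x, f x ∂μ - c := by
  rw [integral_sub hf (integrable_const c), integral_const, probReal_univ, one_smul]

section Gamma

variable {a r : ℝ}

lemma gammaPDFReal_add_one (ha : 0 < a) (hr : 0 < r) {x : ℝ} (hx : 0 ≤ x) :
    gammaPDFReal (a + 1) r x = r * x / a * gammaPDFReal a r x := by
  have hx_pow : x ^ a = x ^ (a - 1) * x := by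
    rw [← rpow_add_one' hx (by linarith), sub_add_cancel]
  simp only [gammaPDFReal, if_pos hx, add_sub_cancel_right, hx_pow,
    rpow_add_one hr.ne', Gamma_add_one ha.ne']
  field_simp

lemma gammaPDFReal_add_one_sub_mul_sub_nonneg (ha : 0 < a) (hr : 0 < r) {f : ℝ → ℝ}
    (hf : MonotoneOn f (Ioi 0)) {x : ℝ} (hx : 0 < x) :
    0 ≤ (gammaPDFReal (a + 1) r x - gammaPDFReal a r x) * (f x - f (a / r)) := by
  have hsign : 0 ≤ (f x - f (a / r)) * (x - a / r) :=
    (monovaryOn_id_iff.mpr hf).sub_mul_sub_nonneg (div_pos ha hr) hx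
  have hdiff : gammaPDFReal (a + 1) r x - gammaPDFReal a r x
      = r / a * gammaPDFReal a r x * (x - a / r) := by
    rw [gammaPDFReal_add_one ha hr hx.le]
    field_simp
  rw [hdiff, mul_assoc, mul_comm (x - a / r)]
  exact mul_nonneg (mul_nonneg (div_pos hr ha).le (gammaPDFReal_nonneg ha hr x)) hsign

lemma gammaMeasure_eq_withDensity_toNNReal (a r : ℝ) :
    gammaMeasure a r = volume.withDensity fun x ↦ ((gammaPDFReal a r x).toNNReal : ENNReal) :=
  rfl

lemma integrable_gammaMeasure_iff (ha : 0 < a) (hr : 0 < r) {g : ℝ → ℝ} :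
    Integrable g (gammaMeasure a r) ↔ Integrable fun x ↦ gammaPDFReal a r x * g x := by
  rw [gammaMeasure_eq_withDensity_toNNReal,
    integrable_withDensity_iff_integrable_smul (measurable_gammaPDFReal a r).real_toNNReal]
  simp only [NNReal.smul_def, smul_eq_mul, Real.coe_toNNReal _ (gammaPDFReal_nonneg ha hr _)]

lemma integral_gammaMeasure (ha : 0 < a) (hr : 0 < r) (g : ℝ → ℝ) :
    ∫ x, g x ∂gammaMeasure a r = ∫ x, gammaPDFReal a r x * g x := by
  rw [gammaMeasure_eq_withDensity_toNNReal,
    integral_withDensity_eq_integral_smul (measurable_gammaPDFReal a r).real_toNNReal]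
  simp only [NNReal.smul_def, smul_eq_mul, Real.coe_toNNReal _ (gammaPDFReal_nonneg ha hr _)]

theorem integral_gammaMeasure_le_add_one (ha : 0 < a) (hr : 0 < r) {f : ℝ → ℝ}
    (hf : MonotoneOn f (Ioi 0)) (h₁ : Integrable f (gammaMeasure a r))
    (h₂ : Integrable f (gammaMeasure (a + 1) r)) :
    ∫ x, f x ∂gammaMeasure a r ≤ ∫ x, f x ∂gammaMeasure (a + 1) r := by
  have ha₁ : 0 < a + 1 := by linarith
  have := isProbabilityMeasure_gammaMeasure ha hr
  have := isProbabilityMeasure_gammaMeasure ha₁ hr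
  set c := f (a / r)
  have hg₁ := (integrable_gammaMeasure_iff ha hr (g := fun x ↦ f x - c)).mp
    (h₁.sub (integrable_const c))
  have hg₂ := (integrable_gammaMeasure_iff ha₁ hr (g := fun x ↦ f x - c)).mp
    (h₂.sub (integrable_const c))
  have hnonneg : 0 ≤ ∫ x, (gammaPDFReal (a + 1) r x - gammaPDFReal a r x) * (f x - c) := by
    -- `f` is only monotone on `(0, ∞)`, and at `x = 0` the sign can fail when `a = 1`.
    refine integral_nonneg_of_ae ?_
    filter_upwards [volume.ae_ne 0] with x hx
    rcases hx.lt_or_gt with hneg | hpos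
    · simp [gammaPDFReal, not_le.mpr hneg]
    · exact gammaPDFReal_add_one_sub_mul_sub_nonneg ha hr hf hpos
  have hdiff : ∫ x, (gammaPDFReal (a + 1) r x - gammaPDFReal a r x) * (f x - c)
      = ∫ x, f x ∂gammaMeasure (a + 1) r - ∫ x, f x ∂gammaMeasure a r := by
    simp only [sub_mul]
    rw [integral_sub hg₂ hg₁, ← integral_gammaMeasure ha₁ hr, ← integral_gammaMeasure ha hr,
      integral_sub_const_of_isProbabilityMeasure h₂,
      integral_sub_const_of_isProbabilityMeasure h₁]
    ring
  linarith

end Gamma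

lemma chiSq_add_two (m : ℕ) : chiSq (m + 2) = gammaMeasure ((m : ℝ) / 2 + 1) (1 / 2) := by
  rw [chiSq]
  congr 1
  push_cast
  ring

theorem chiSqExp_le_chiSqExp_add_two {m : ℕ} (hm : 0 < m) {f : ℝ → ℝ}
    (hf : MonotoneOn f (Ioi 0)) (h₁ : Integrable f (chiSq m))
    (h₂ : Integrable f (chiSq (m + 2))) :
    chiSqExp m f ≤ chiSqExp (m + 2) f := by
  rw [chiSq_add_two] at h₂
  rw [chiSqExp, chiSqExp, chiSq_add_two]
  exact integral_gammaMeasure_le_add_one (by positivity) (by norm_num) hf h₁ h₂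

lemma summable_mul_integral_of_summable_mul_integral_abs {α : Type*} [MeasurableSpace α]
    {w : ℕ → ℝ} (hw : ∀ k, 0 ≤ w k) {μ : ℕ → Measure α} {f : α → ℝ}
    (h : Summable fun k ↦ w k * ∫ x, |f x| ∂μ k) :
    Summable fun k ↦ w k * ∫ x, f x ∂μ k := by
  refine h.of_norm_bounded fun k ↦ ?_
  rw [norm_mul, Real.norm_of_nonneg (hw k)]
  exact mul_le_mul_of_nonneg_left (norm_integral_le_integral_norm f) (hw k)

theorem stmt_1 (p : ℕ) (hp : 3 ≤ p) (lam : ℝ) (hlam : 0 ≤ lam) (f : ℝ → ℝ)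
    (hmono : MonotoneOn f (Set.Ioi (0 : ℝ)))
    (hint : ∀ m : ℕ, p ≤ m → Integrable f (chiSq m))
    (hsum1 : Summable (fun k : ℕ =>
      (Real.exp (-(lam / 2)) * (lam / 2) ^ k / (Nat.factorial k)) *
        chiSqExp (p + 2 * k) (fun u => |f u|)))
    (hsum2 : Summable (fun k : ℕ =>
      (Real.exp (-(lam / 2)) * (lam / 2) ^ k / (Nat.factorial k)) *
        chiSqExp (p + 2 + 2 * k) (fun u => |f u|))) :
    ncChiSqExp p lam f ≤ ncChiSqExp (p + 2) lam f := by
  have hw : ∀ k : ℕ, 0 ≤ Real.exp (-(lam / 2)) * (lam / 2) ^ k / (Nat.factorial k) :=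
    fun k ↦ by positivity
  refine Summable.tsum_le_tsum (fun k ↦ mul_le_mul_of_nonneg_left ?_ (hw k))
    (summable_mul_integral_of_summable_mul_integral_abs hw hsum1)
    (summable_mul_integral_of_summable_mul_integral_abs hw hsum2)
  rw [show p + 2 + 2 * k = p + 2 * k + 2 by ring]
  exact chiSqExp_le_chiSqExp_add_two (by omega) hmono (hint _ (by omega)) (hint _ (by omega))
end

section
/- For every positive integer n and every real c > 0, 1/(n+4+c)² ≤ E_{χ²_{n+4}}[1/(u+c)²] ≤ 1/(n+c)². -/
/-!
Lower bound: `u ↦ 1/(u+c)²` is convex on `[0, ∞)` and `χ²_{n+4}` has mean `n+4`, so this is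
Jensen's inequality.

Upper bound: for `u > 0`,
`1/(u+c)² ≤ 1/(n+c)² - 2n²/(n+c)³ · u⁻¹ + 2n³/(n+c)³ · u⁻²`,
the right-hand side being a quadratic in `u⁻¹` tangent to the left-hand side at `u = n`
(the difference is `(u-n)²` times a positive factor). The Gamma-function recurrence gives
`E[u⁻¹] = 1/(n+2)` and `E[u⁻²] = 1/((n+2)n)` under `χ²_{n+4}`, and with these moments the mean
of the right-hand side is exactly `1/(n+c)²`.
-/

open MeasureTheory ProbabilityTheory

open Real Set
open scoped ENNReal NNReal

namespace ProbabilityTheory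

lemma gammaMeasure_ae_pos (a r : ℝ) : ∀ᵐ x ∂gammaMeasure a r, 0 < x := by
  rw [ae_iff]
  have hs : {x : ℝ | ¬ 0 < x} = Iic 0 := by ext x; simp
  rw [hs, gammaMeasure, withDensity_apply _ measurableSet_Iic,
    lintegral_Iic_eq_lintegral_Iio_add_Icc _ le_rfl, lintegral_gammaPDF_of_nonpos le_rfl,
    Icc_self, setLIntegral_measure_zero _ _ (by simp), add_zero]

section GammaMoments

variable {a r : ℝ}

lemma gammaMeasure_eq_withDensity_toNNReal (a r : ℝ) :
    gammaMeasure a r = volume.withDensity fun x => ((gammaPDFReal a r x).toNNReal : ℝ≥0∞) :=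
  rfl

lemma toNNReal_gammaPDFReal_smul (ha : 0 < a) (hr : 0 < r) (g : ℝ → ℝ) :
    (fun x => (gammaPDFReal a r x).toNNReal • g x) = fun x => gammaPDFReal a r x * g x := by
  ext x
  rw [NNReal.smul_def, smul_eq_mul, Real.coe_toNNReal _ (gammaPDFReal_nonneg ha hr x)]

lemma integrable_gammaMeasure_iff (ha : 0 < a) (hr : 0 < r) {g : ℝ → ℝ} :
    Integrable g (gammaMeasure a r) ↔ Integrable (fun x => gammaPDFReal a r x * g x) := by
  rw [gammaMeasure_eq_withDensity_toNNReal, integrable_withDensity_iff_integrable_smul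
    (measurable_gammaPDFReal a r).real_toNNReal, toNNReal_gammaPDFReal_smul ha hr]

lemma integral_gammaMeasure (ha : 0 < a) (hr : 0 < r) (g : ℝ → ℝ) :
    ∫ x, g x ∂gammaMeasure a r = ∫ x, gammaPDFReal a r x * g x := by
  rw [gammaMeasure_eq_withDensity_toNNReal, integral_withDensity_eq_integral_smul
    (measurable_gammaPDFReal a r).real_toNNReal, toNNReal_gammaPDFReal_smul ha hr]

lemma gammaPDFReal_mul_rpow_ae_eq (a r p : ℝ) :
    (fun x => gammaPDFReal a r x * x ^ p) =ᵐ[volume]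
      (Ioi 0).indicator fun x => r ^ a / Gamma a * (x ^ (a + p - 1) * exp (-(r * x))) := by
  filter_upwards [compl_mem_ae_iff.mpr (measure_singleton (0 : ℝ))] with x hx
  rcases lt_or_gt_of_ne hx with hneg | hpos
  · rw [indicator_of_notMem (notMem_Ioi.mpr hneg.le), gammaPDFReal, if_neg (not_le.mpr hneg),
      zero_mul]
  · rw [indicator_of_mem (mem_Ioi.mpr hpos), gammaPDFReal, if_pos hpos.le,
      show a + p - 1 = (a - 1) + p by ring, rpow_add hpos]
    ring

lemma integrable_gammaPDFReal_mul_rpow (hr : 0 < r) {p : ℝ} (hap : 0 < a + p) :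
    Integrable fun x => gammaPDFReal a r x * x ^ p := by
  refine (integrable_congr (gammaPDFReal_mul_rpow_ae_eq a r p)).mpr ?_
  rw [integrable_indicator_iff measurableSet_Ioi]
  have h : IntegrableOn (fun x => x ^ (a + p - 1) * exp (-(r * x))) (Ioi 0) := by
    simpa using integrableOn_rpow_mul_exp_neg_mul_rpow (s := a + p - 1) (by linarith) one_pos hr
  exact h.const_mul _

lemma integral_gammaPDFReal_mul_rpow (hr : 0 < r) {p : ℝ} (hap : 0 < a + p) :
    ∫ x, gammaPDFReal a r x * x ^ p = Gamma (a + p) / (Gamma a * r ^ p) := by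
  rw [integral_congr_ae (gammaPDFReal_mul_rpow_ae_eq a r p),
    integral_indicator measurableSet_Ioi, integral_const_mul,
    integral_rpow_mul_exp_neg_mul_Ioi hap hr, one_div, inv_rpow hr.le, rpow_add hr]
  field_simp

lemma integrable_rpow_gammaMeasure (ha : 0 < a) (hr : 0 < r) {p : ℝ} (hap : 0 < a + p) :
    Integrable (fun x => x ^ p) (gammaMeasure a r) :=
  (integrable_gammaMeasure_iff ha hr).mpr (integrable_gammaPDFReal_mul_rpow hr hap)

lemma integral_rpow_gammaMeasure (ha : 0 < a) (hr : 0 < r) {p : ℝ} (hap : 0 < a + p) :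
    ∫ x, x ^ p ∂gammaMeasure a r = Gamma (a + p) / (Gamma a * r ^ p) := by
  rw [integral_gammaMeasure ha hr, integral_gammaPDFReal_mul_rpow hr hap]

lemma integral_id_gammaMeasure (ha : 0 < a) (hr : 0 < r) : ∫ x, x ∂gammaMeasure a r = a / r := by
  have h := integral_rpow_gammaMeasure (p := 1) ha hr (by linarith)
  simp only [rpow_one] at h
  rw [h, Gamma_add_one ha.ne']
  field_simp

lemma integral_inv_gammaMeasure (ha : 1 < a) (hr : 0 < r) :
    ∫ x, x⁻¹ ∂gammaMeasure a r = r / (a - 1) := by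
  have h := integral_rpow_gammaMeasure (a := a) (p := -1) (by linarith) hr (by linarith)
  have hΓ := Gamma_add_one (s := a - 1) (by linarith)
  simp only [rpow_neg_one, ← sub_eq_add_neg] at h
  have := (Gamma_pos_of_pos (show 0 < a - 1 by linarith)).ne'
  rw [sub_add_cancel] at hΓ
  rw [h, hΓ]
  field_simp

lemma integral_inv_sq_gammaMeasure (ha : 2 < a) (hr : 0 < r) :
    ∫ x, (x ^ 2)⁻¹ ∂gammaMeasure a r = r ^ 2 / ((a - 1) * (a - 2)) := by
  have h := integral_rpow_gammaMeasure (a := a) (p := -2) (by linarith) hr (by linarith)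
  have hΓ₁ := Gamma_add_one (s := a - 1) (by linarith)
  have hΓ₂ := Gamma_add_one (s := a - 2) (by linarith)
  simp only [show ∀ x : ℝ, x ^ (-2 : ℝ) = (x ^ 2)⁻¹ by simp, ← sub_eq_add_neg] at h
  have := (Gamma_pos_of_pos (show 0 < a - 2 by linarith)).ne'
  rw [sub_add_cancel] at hΓ₁
  rw [show a - 2 + 1 = a - 1 by ring] at hΓ₂
  rw [h, hΓ₁, hΓ₂]
  field_simp

end GammaMoments

end ProbabilityTheory

lemma chiSq_ae_pos (m : ℕ) : ∀ᵐ x ∂chiSq m, 0 < x :=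
  gammaMeasure_ae_pos _ _

lemma isProbabilityMeasure_chiSq {m : ℕ} (hm : 0 < m) : IsProbabilityMeasure (chiSq m) :=
  isProbabilityMeasure_gammaMeasure (div_pos (Nat.cast_pos.mpr hm) two_pos) one_half_pos

section ChiSqMoments

variable {m : ℕ}

lemma integrable_id_chiSq (hm : 0 < m) : Integrable (fun x => x) (chiSq m) := by
  have hm' : (0 : ℝ) < m := Nat.cast_pos.mpr hm
  rw [chiSq]
  simpa only [rpow_one] using
    integrable_rpow_gammaMeasure (p := 1) (half_pos hm') one_half_pos (by linarith)

lemma integral_id_chiSq (hm : 0 < m) : ∫ x, x ∂chiSq m = m := by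
  rw [chiSq, integral_id_gammaMeasure (half_pos (Nat.cast_pos.mpr hm)) one_half_pos]
  ring

lemma integrable_inv_chiSq (hm : 2 < m) : Integrable (fun x => x⁻¹) (chiSq m) := by
  have hm' : (2 : ℝ) < m := by exact_mod_cast hm
  rw [chiSq]
  simpa only [rpow_neg_one] using
    integrable_rpow_gammaMeasure (p := -1) (a := m / 2) (by linarith) one_half_pos (by linarith)

lemma integral_inv_chiSq (hm : 2 < m) : ∫ x, x⁻¹ ∂chiSq m = 1 / (m - 2) := by
  have hm' : (2 : ℝ) < m := by exact_mod_cast hm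
  rw [chiSq, integral_inv_gammaMeasure (by linarith) one_half_pos]
  field_simp

lemma integrable_inv_sq_chiSq (hm : 4 < m) : Integrable (fun x => (x ^ 2)⁻¹) (chiSq m) := by
  have hm' : (4 : ℝ) < m := by exact_mod_cast hm
  rw [chiSq]
  simpa only [show ∀ x : ℝ, x ^ (-2 : ℝ) = (x ^ 2)⁻¹ by simp] using
    integrable_rpow_gammaMeasure (p := -2) (a := m / 2) (by linarith) one_half_pos (by linarith)

lemma integral_inv_sq_chiSq (hm : 4 < m) :
    ∫ x, (x ^ 2)⁻¹ ∂chiSq m = 1 / ((m - 2) * (m - 4)) := by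
  have hm' : (4 : ℝ) < m := by exact_mod_cast hm
  rw [chiSq, integral_inv_sq_gammaMeasure (by linarith) one_half_pos,
    show (m : ℝ) / 2 - 1 = (m - 2) / 2 by ring, show (m : ℝ) / 2 - 2 = (m - 4) / 2 by ring]
  field_simp

end ChiSqMoments

section InverseSquareBounds

variable {μ : Measure ℝ} {c : ℝ}

lemma convexOn_one_div_add_sq (hc : 0 < c) : ConvexOn ℝ (Ici 0) fun x : ℝ => 1 / (x + c) ^ 2 := by
  refine (((convexOn_zpow (-2)).translate_right c).subset (fun x hx => ?_) (convex_Ici 0)).congr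
    fun x _ => ?_
  · change 0 < c + x
    linarith [mem_Ici.mp hx]
  · simp [zpow_neg, add_comm]

lemma integrable_one_div_add_sq [IsFiniteMeasure μ] (hc : 0 < c) (hμ : ∀ᵐ x ∂μ, 0 ≤ x) :
    Integrable (fun x => 1 / (x + c) ^ 2) μ := by
  refine (integrable_const (1 / c ^ 2)).mono'
    (by fun_prop : Measurable fun x : ℝ => 1 / (x + c) ^ 2).aestronglyMeasurable ?_
  filter_upwards [hμ] with x hx
  rw [norm_of_nonneg (by positivity)]
  gcongr
  linarith

lemma one_div_integral_add_sq_le [IsProbabilityMeasure μ] (hc : 0 < c) (hμ : ∀ᵐ x ∂μ, 0 ≤ x)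
    (hint : Integrable (fun x => x) μ) :
    1 / ((∫ x, x ∂μ) + c) ^ 2 ≤ ∫ x, 1 / (x + c) ^ 2 ∂μ :=
  (convexOn_one_div_add_sq hc).map_integral_le
    (continuousOn_const.div ((continuousOn_id.add continuousOn_const).pow 2)
      fun x hx => by have := mem_Ici.mp hx; positivity)
    isClosed_Ici hμ hint (integrable_one_div_add_sq hc hμ)

lemma one_div_add_sq_le {x n : ℝ} (hx : 0 < x) (hn : 0 < n) (hc : 0 ≤ c) :
    1 / (x + c) ^ 2 ≤
      1 / (n + c) ^ 2 - 2 * n ^ 2 / (n + c) ^ 3 * x⁻¹ + 2 * n ^ 3 / (n + c) ^ 3 * (x ^ 2)⁻¹ := by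
  rw [← sub_nonneg]
  have key : 1 / (n + c) ^ 2 - 2 * n ^ 2 / (n + c) ^ 3 * x⁻¹ + 2 * n ^ 3 / (n + c) ^ 3 * (x ^ 2)⁻¹
      - 1 / (x + c) ^ 2 =
        (x - n) ^ 2 * ((n + c) * x ^ 2 + (4 * c * n + 2 * c ^ 2) * x + 2 * c ^ 2 * n)
          / (x ^ 2 * (x + c) ^ 2 * (n + c) ^ 3) := by
    field_simp
    ring
  rw [key]
  positivity

lemma integral_one_div_add_sq_le [IsProbabilityMeasure μ] (hμ : ∀ᵐ x ∂μ, 0 < x)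
    (hinv : Integrable (fun x => x⁻¹) μ) (hinv_sq : Integrable (fun x => (x ^ 2)⁻¹) μ) {n : ℝ}
    (hn : 0 < n) (hc : 0 ≤ c) :
    ∫ x, 1 / (x + c) ^ 2 ∂μ ≤ 1 / (n + c) ^ 2 - 2 * n ^ 2 / (n + c) ^ 3 * ∫ x, x⁻¹ ∂μ
      + 2 * n ^ 3 / (n + c) ^ 3 * ∫ x, (x ^ 2)⁻¹ ∂μ := by
  have hint₁ : Integrable (fun x => 1 / (n + c) ^ 2 - 2 * n ^ 2 / (n + c) ^ 3 * x⁻¹) μ :=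
    (integrable_const _).sub (hinv.const_mul _)
  have hint₂ : Integrable (fun x => 2 * n ^ 3 / (n + c) ^ 3 * (x ^ 2)⁻¹) μ := hinv_sq.const_mul _
  calc ∫ x, 1 / (x + c) ^ 2 ∂μ
      ≤ ∫ x, (1 / (n + c) ^ 2 - 2 * n ^ 2 / (n + c) ^ 3 * x⁻¹
          + 2 * n ^ 3 / (n + c) ^ 3 * (x ^ 2)⁻¹) ∂μ :=
        integral_mono_of_nonneg (ae_of_all _ fun x => by positivity) (hint₁.add hint₂)
          (hμ.mono fun x hx => one_div_add_sq_le hx hn hc)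
    _ = _ := by
        rw [integral_add hint₁ hint₂,
          integral_sub (integrable_const _) (hinv.const_mul _), integral_const,
          integral_const_mul, integral_const_mul, probReal_univ, smul_eq_mul, one_mul]

end InverseSquareBounds

theorem stmt_3 (n : ℕ) (hn : 1 ≤ n) (c : ℝ) (hc : 0 < c) :
    1 / ((n : ℝ) + 4 + c) ^ 2 ≤ chiSqExp (n + 4) (fun u => 1 / (u + c) ^ 2) ∧
    chiSqExp (n + 4) (fun u => 1 / (u + c) ^ 2) ≤ 1 / ((n : ℝ) + c) ^ 2 := by
  have : IsProbabilityMeasure (chiSq (n + 4)) := isProbabilityMeasure_chiSq (by omega)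
  have hcast : ((n + 4 : ℕ) : ℝ) = n + 4 := by push_cast; ring
  constructor
  · calc 1 / ((n : ℝ) + 4 + c) ^ 2 = 1 / ((∫ x, x ∂chiSq (n + 4)) + c) ^ 2 := by
          rw [integral_id_chiSq (by omega), hcast]
      _ ≤ _ := one_div_integral_add_sq_le hc ((chiSq_ae_pos _).mono fun x hx => hx.le)
          (integrable_id_chiSq (by omega))
  · calc chiSqExp (n + 4) (fun u => 1 / (u + c) ^ 2)
        ≤ _ := integral_one_div_add_sq_le (chiSq_ae_pos _) (integrable_inv_chiSq (by omega))
          (integrable_inv_sq_chiSq (by omega)) (Nat.cast_pos.mpr hn) hc.le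
      _ = 1 / ((n : ℝ) + c) ^ 2 := by
        rw [integral_inv_chiSq (by omega), integral_inv_sq_chiSq (by omega), hcast,
          show (n : ℝ) + 4 - 2 = n + 2 by ring, add_sub_cancel_right]
        field_simp
        ring
end
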